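/- arXiv:2005.09366 — 5 statements merged into one kernel-verified Lean document; each statement's English description precedes it below -/
import Mathlib

section
/- Let α, β be nonzero real numbers and define f₂(θ) = α cos³θ + β sin²θ. Then every zero of f₂ is simple: if f₂(θ) = 0 then f₂'(θ) ≠ 0. -/
/-! At a zero of `f₂ θ = α cos³θ + β sin²θ`, write `s = sin θ`, `c = cos θ`. The derivative factors
as `s c (2β - 3α c)`. If `s = 0` then `c² = 1` and `f₂ θ = α c³ ≠ 0`; if `c = 0` then `f₂ θ = β ≠ 0`;
and if `2β = 3α c` then `2 f₂ θ = α c (3 - c²)`, which vanishes only when `c = 0` (as `c² ≤ 1 < 3`),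
forcing `β = 0`. -/

open Real

theorem hasDerivAt_mul_cos_pow_three_add_mul_sin_sq (α β θ : ℝ) :
    HasDerivAt (fun x : ℝ => α * cos x ^ 3 + β * sin x ^ 2)
      (sin θ * cos θ * (2 * β - 3 * α * cos θ)) θ := by
  have hcos := ((hasDerivAt_cos θ).pow 3).const_mul α
  have hsin := ((hasDerivAt_sin θ).pow 2).const_mul β
  refine (hcos.add hsin).congr_deriv ?_
  ring

theorem not_critical_zero_on_unit_circle {α β s c : ℝ} (hα : α ≠ 0) (hβ : β ≠ 0)
    (hsc : s ^ 2 + c ^ 2 = 1) (hzero : α * c ^ 3 + β * s ^ 2 = 0)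
    (hcrit : s * c * (2 * β - 3 * α * c) = 0) : False := by
  rcases mul_eq_zero.1 hcrit with hsc0 | hlin
  · rcases mul_eq_zero.1 hsc0 with rfl | rfl
    · have hc : c ≠ 0 := by rintro rfl; norm_num at hsc
      simp [hα, hc] at hzero
    · have hs : s ^ 2 = 1 := by simpa using hsc
      simp [hs, hβ] at hzero
  · have hc2 : c ^ 2 ≤ 1 := by linarith [sq_nonneg s]
    have hfactor : α * c * (3 - c ^ 2) = 0 := by
      linear_combination 2 * hzero - s ^ 2 * hlin - 3 * α * c * hsc
    have hc : c = 0 := by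
      simpa [hα, show (3 : ℝ) - c ^ 2 ≠ 0 by nlinarith] using hfactor
    subst hc
    exact hβ (by linarith)

theorem simple_zeros_f2 (α β : ℝ) (hα : α ≠ 0) (hβ : β ≠ 0) (θ : ℝ)
    (h : α * Real.cos θ ^ 3 + β * Real.sin θ ^ 2 = 0) :
    deriv (fun θ : ℝ => α * Real.cos θ ^ 3 + β * Real.sin θ ^ 2) θ ≠ 0 := by
  rw [(hasDerivAt_mul_cos_pow_three_add_mul_sin_sq α β θ).deriv]
  exact fun hcrit => not_critical_zero_on_unit_circle hα hβ (sin_sq_add_cos_sq θ) h hcrit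
end

section
/- Let α, β be nonzero real numbers and define f₃(θ) = α cos²θ sin θ + β sin²θ. Then every zero of f₃ is simple: if f₃(θ) = 0 then f₃'(θ) ≠ 0. -/
/-!
Write `s = sin θ`, `c = cos θ`. Then `f₃ = s (α c² + β s)` and
`f₃' = c (α c² - 2α s² + 2β s)`. At a zero with `s = 0` we have `c² = 1`, so `f₃' = α c ≠ 0`.
At a zero of the second factor, neither `s` nor `c` vanishes (else `α = 0` or `β = 0`), and
subtracting `c (α c² + β s)` turns `f₃'` into `c s (β - 2α s)`. Were this zero, `β = 2α s`
would give `α (1 + s²) = α c² + 2α s² = 0`.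
-/

open Real

theorem hasDerivAt_f3 (α β θ : ℝ) :
    HasDerivAt (fun θ : ℝ => α * cos θ ^ 2 * sin θ + β * sin θ ^ 2)
      (cos θ * (α * cos θ ^ 2 - 2 * α * sin θ ^ 2 + 2 * β * sin θ)) θ := by
  refine ((((hasDerivAt_cos θ).pow 2).const_mul α).mul (hasDerivAt_sin θ)).add
    (((hasDerivAt_sin θ).pow 2).const_mul β) |>.congr_deriv ?_
  simp only [Nat.cast_ofNat, Nat.add_one_sub_one, pow_one, Pi.pow_apply]
  ring

section

variable {α β θ : ℝ}

theorem f3_deriv_ne_zero_of_sin_eq_zero (hα : α ≠ 0) (hs : sin θ = 0) :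
    cos θ * (α * cos θ ^ 2 - 2 * α * sin θ ^ 2 + 2 * β * sin θ) ≠ 0 := by
  have hc : cos θ ^ 2 = 1 := by linear_combination sin_sq_add_cos_sq θ - sin θ * hs
  have hreduce : cos θ * (α * cos θ ^ 2 - 2 * α * sin θ ^ 2 + 2 * β * sin θ) = α * cos θ := by
    rw [hs]
    linear_combination α * cos θ * hc
  rw [hreduce]
  exact mul_ne_zero hα fun hc0 => by simp [hc0] at hc

theorem f3_deriv_ne_zero_of_quadratic_eq_zero (hα : α ≠ 0) (hβ : β ≠ 0)
    (hq : α * cos θ ^ 2 + β * sin θ = 0) :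
    cos θ * (α * cos θ ^ 2 - 2 * α * sin θ ^ 2 + 2 * β * sin θ) ≠ 0 := by
  have hs : sin θ ≠ 0 := fun hs => hα <| by
    linear_combination hq - β * hs - α * (sin_sq_add_cos_sq θ - sin θ * hs)
  have hc : cos θ ≠ 0 := fun hc => hs <| by
    simpa [hc, hβ] using hq
  have hreduce : cos θ * (α * cos θ ^ 2 - 2 * α * sin θ ^ 2 + 2 * β * sin θ)
      = cos θ * sin θ * (β - 2 * α * sin θ) := by
    linear_combination cos θ * hq
  rw [hreduce]
  refine mul_ne_zero (mul_ne_zero hc hs) (sub_ne_zero.mpr fun hβs => ?_)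
  have hzero : α * (1 + sin θ ^ 2) = 0 := by
    linear_combination hq - sin θ * hβs - α * sin_sq_add_cos_sq θ
  exact hα ((mul_eq_zero.mp hzero).resolve_right (by positivity))

end

theorem simple_zeros_f3 (α β : ℝ) (hα : α ≠ 0) (hβ : β ≠ 0) (θ : ℝ)
    (h : α * Real.cos θ ^ 2 * Real.sin θ + β * Real.sin θ ^ 2 = 0) :
    deriv (fun θ : ℝ => α * Real.cos θ ^ 2 * Real.sin θ + β * Real.sin θ ^ 2) θ ≠ 0 := by
  rw [(hasDerivAt_f3 α β θ).deriv]
  have hfactor : sin θ * (α * cos θ ^ 2 + β * sin θ) = 0 := by linear_combination h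
  rcases mul_eq_zero.mp hfactor with hs | hq
  · exact f3_deriv_ne_zero_of_sin_eq_zero hα hs
  · exact f3_deriv_ne_zero_of_quadratic_eq_zero hα hβ hq
end

section
/- Let p ∈ [1,2], r ∈ [2,∞] with 1/p = 1/2 + 1/r, p' = p/(p-1), and let A be a linear operator on functions on ℤᵈ. Suppose ‖W₁ A W₂‖_{B(ℓ²)} ≤ C ‖W₁‖_{ℓʳ} ‖W₂‖_{ℓʳ} for all W₁, W₂ ∈ ℓʳ(ℤᵈ). Then ‖A‖_{B(ℓᵖ, ℓᵖ')} ≤ C. -/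
/-!
Factor `f = |f|^{p/r} · (|f|^{p/2-1} f)`: the two factors have `ℓʳ` and `ℓ²` norms whose product
is `‖f‖_p`, so the hypothesis gives `‖W · A f‖₂ ≤ C ‖f‖_p ‖W‖_r` for every weight `W`. Since
`1/p' + 1/r = 1/2`, the weight `W = 1_s |A f|^{p'/2-1}` turns this into
`‖A f‖_{ℓ^{p'}(s)} ≤ C ‖f‖_p` for every finite set `s`; for `p' = ∞` one tests against point
masses instead.
-/

open MeasureTheory ENNReal

theorem ENNReal.HolderTriple.inv_toReal_add_inv_toReal {p q r : ℝ≥0∞} [HolderTriple p q r]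
    (hp : p ≠ 0) (hq : q ≠ 0) : p.toReal⁻¹ + q.toReal⁻¹ = r.toReal⁻¹ := by
  rw [← toReal_inv, ← toReal_inv, ← toReal_inv, ← toReal_add (inv_ne_top.2 hp) (inv_ne_top.2 hq),
    HolderTriple.inv_add_inv_eq_inv p q r]

theorem ENNReal.HolderTriple.of_holderConjugate (a b c c' b' : ℝ≥0∞) [HolderTriple a b c]
    [HolderConjugate c c'] [HolderConjugate b b'] : HolderTriple c' a b' := by
  refine ⟨(ENNReal.add_right_inj (inv_ne_top.2 (HolderConjugate.ne_zero b b'))).1 ?_⟩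
  calc b⁻¹ + (c'⁻¹ + a⁻¹) = (a⁻¹ + b⁻¹) + c'⁻¹ := by ring
    _ = 1 := by rw [HolderTriple.inv_add_inv_eq_inv a b c, HolderConjugate.inv_add_inv_eq_one]
    _ = b⁻¹ + b'⁻¹ := (HolderConjugate.inv_add_inv_eq_one b b').symm

theorem ENNReal.rpow_le_of_rpow_add_le_mul_rpow {T K : ℝ≥0∞} {a b : ℝ} (hT : T ≠ ∞) (ha : 0 < a)
    (h : T ^ (a + b) ≤ K * T ^ b) : T ^ a ≤ K := by
  rcases eq_or_ne T 0 with rfl | hT0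
  · simp [ENNReal.zero_rpow_of_pos ha]
  rw [ENNReal.rpow_add _ _ hT0 hT] at h
  exact (ENNReal.mul_le_mul_iff_left (ENNReal.rpow_pos (pos_iff_ne_zero.2 hT0) hT).ne'
    (ENNReal.rpow_ne_top_of_ne_zero hT0 hT)).1 h

section

variable {𝕜 : Type*} [RCLike 𝕜]

theorem enorm_ofReal_norm_rpow (a : 𝕜) {s : ℝ} (hs : 0 ≤ s) :
    ‖((‖a‖ ^ s : ℝ) : 𝕜)‖ₑ = ‖a‖ₑ ^ s := by
  rw [← ofReal_norm, RCLike.norm_ofReal, abs_of_nonneg (by positivity),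
    ← ENNReal.ofReal_rpow_of_nonneg (norm_nonneg a) hs, ofReal_norm]

theorem enorm_ofReal_norm_rpow_sub_one_mul (a : 𝕜) {t : ℝ} (ht : 0 < t) :
    ‖((‖a‖ ^ (t - 1) : ℝ) : 𝕜) * a‖ₑ = ‖a‖ₑ ^ t := by
  have : ‖((‖a‖ ^ (t - 1) : ℝ) : 𝕜) * a‖ = ‖a‖ ^ t := by
    rcases eq_or_ne a 0 with rfl | ha
    · simp [Real.zero_rpow ht.ne']
    rw [norm_mul, RCLike.norm_ofReal, abs_of_nonneg (by positivity),
      Real.rpow_sub_one (norm_ne_zero_iff.2 ha), div_mul_cancel₀ _ (norm_ne_zero_iff.2 ha)]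
  rw [← ofReal_norm, this, ← ENNReal.ofReal_rpow_of_nonneg (norm_nonneg a) ht.le, ofReal_norm]

theorem ofReal_norm_rpow_mul_ofReal_norm_rpow_sub_one_mul (a : 𝕜) {s t : ℝ} (hst : s + t = 1) :
    ((‖a‖ ^ s : ℝ) : 𝕜) * (((‖a‖ ^ (t - 1) : ℝ) : 𝕜) * a) = a := by
  rcases eq_or_ne a 0 with rfl | ha
  · simp
  rw [← mul_assoc, ← RCLike.ofReal_mul, ← Real.rpow_add (norm_pos_iff.2 ha),
    show s + (t - 1) = 0 by linarith, Real.rpow_zero, RCLike.ofReal_one, one_mul]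

variable {α : Type*} [MeasurableSpace α] {μ : Measure α}

theorem eLpNorm_eq_of_enorm_rpow_eq {E : Type*} [NormedAddCommGroup E] {q : ℝ≥0∞} (hq0 : q ≠ 0)
    (hq : q ≠ ∞) {f : α → E} {F : α → ℝ≥0∞} (hf : ∀ x, ‖f x‖ₑ ^ q.toReal = F x) :
    eLpNorm f q μ = (∫⁻ x, F x ∂μ) ^ (1 / q.toReal) := by
  simp only [eLpNorm_eq_lintegral_rpow_enorm_toReal hq0 hq, hf]

theorem eLpNorm_one_top_le : eLpNorm (1 : α → 𝕜) ∞ μ ≤ 1 := by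
  rw [eLpNorm_exponent_top]
  exact eLpNormEssSup_le_of_ae_enorm_bound (ae_of_all _ fun _ => by simp)

theorem exists_eq_mul_and_eLpNorm_mul_eLpNorm_le {p q r : ℝ≥0∞} [HolderTriple q r p]
    (hp : p ≠ 0) (hr : r ≠ ∞) (f : α → 𝕜) :
    ∃ g h : α → 𝕜, f = g * h ∧ eLpNorm g q μ * eLpNorm h r μ ≤ eLpNorm f p μ := by
  rcases eq_or_ne q ∞ with rfl | hq
  · obtain rfl : p = r := HolderTriple.unique ∞ r p r
    exact ⟨1, f, (one_mul f).symm, mul_le_of_le_one_left zero_le eLpNorm_one_top_le⟩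
  have hq0 : q ≠ 0 := (pos_iff_ne_zero.2 hp |>.trans_le (HolderTriple.le q r p)).ne'
  have hr0 : r ≠ 0 := (pos_iff_ne_zero.2 hp |>.trans_le (HolderTriple.le r q p)).ne'
  have hpt : p ≠ ∞ := ne_top_of_le_ne_top hr (HolderTriple.le r q p)
  have hP : 0 < p.toReal := toReal_pos hp hpt
  have hQ : 0 < q.toReal := toReal_pos hq0 hq
  have hR : 0 < r.toReal := toReal_pos hr0 hr
  have hQR := HolderTriple.inv_toReal_add_inv_toReal hq0 hr0 (r := p)
  set P := p.toReal
  set Q := q.toReal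
  set R := r.toReal
  refine ⟨fun x => ((‖f x‖ ^ (P / Q) : ℝ) : 𝕜), fun x => ((‖f x‖ ^ (P / R - 1) : ℝ) : 𝕜) * f x,
    funext fun x => (ofReal_norm_rpow_mul_ofReal_norm_rpow_sub_one_mul (f x) ?_).symm, le_of_eq ?_⟩
  · field_simp at hQR ⊢
    linarith
  have hg : ∀ x, ‖((‖f x‖ ^ (P / Q) : ℝ) : 𝕜)‖ₑ ^ Q = ‖f x‖ₑ ^ P := fun x => by
    rw [enorm_ofReal_norm_rpow _ (by positivity), ← ENNReal.rpow_mul, div_mul_cancel₀ _ hQ.ne']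
  have hh : ∀ x, ‖((‖f x‖ ^ (P / R - 1) : ℝ) : 𝕜) * f x‖ₑ ^ R = ‖f x‖ₑ ^ P := fun x => by
    rw [enorm_ofReal_norm_rpow_sub_one_mul _ (by positivity), ← ENNReal.rpow_mul,
      div_mul_cancel₀ _ hR.ne']
  rw [eLpNorm_eq_of_enorm_rpow_eq hq0 hq hg, eLpNorm_eq_of_enorm_rpow_eq hr0 hr hh,
    eLpNorm_eq_lintegral_rpow_enorm_toReal hp hpt, ← ENNReal.rpow_add_of_nonneg _ _ (by positivity)
    (by positivity)]
  congr 1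
  simpa only [one_div] using hQR

theorem setLIntegral_enorm_rpow_le_of_forall_eLpNorm_mul_le {q r : ℝ≥0∞} [HolderTriple q r 2]
    (hq : q ≠ ∞) (hr : r ≠ ∞) {g : α → 𝕜} {K : ℝ≥0∞}
    (hK : ∀ W : α → 𝕜, eLpNorm (W * g) 2 μ ≤ K * eLpNorm W r μ) {s : Set α}
    (hs : MeasurableSet s) (hfin : ∫⁻ x in s, ‖g x‖ₑ ^ q.toReal ∂μ ≠ ∞) :
    (∫⁻ x in s, ‖g x‖ₑ ^ q.toReal ∂μ) ^ (1 / q.toReal) ≤ K := by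
  have hq0 : q ≠ 0 := (two_pos.trans_le (HolderTriple.le q r 2)).ne'
  have hr0 : r ≠ 0 := (two_pos.trans_le (HolderTriple.le r q 2)).ne'
  have hQ : 0 < q.toReal := toReal_pos hq0 hq
  have hR : 0 < r.toReal := toReal_pos hr0 hr
  have hQR := HolderTriple.inv_toReal_add_inv_toReal hq0 hr0 (r := 2)
  rw [toReal_ofNat] at hQR
  set Q := q.toReal
  set R := r.toReal
  have hexp : 0 ≤ Q / 2 - 1 := by
    field_simp at hQR ⊢
    nlinarith
  have hexpR : (Q / 2 - 1) * R = Q := by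
    field_simp at hQR ⊢
    nlinarith
  set W : α → 𝕜 := s.indicator fun x => ((‖g x‖ ^ (Q / 2 - 1) : ℝ) : 𝕜)
  have hWg : ∀ x, ‖(W * g) x‖ₑ ^ (2 : ℝ≥0∞).toReal = s.indicator (fun x => ‖g x‖ₑ ^ Q) x := by
    intro x
    by_cases hx : x ∈ s
    · simp only [W, Pi.mul_apply, Set.indicator_of_mem hx]
      rw [enorm_ofReal_norm_rpow_sub_one_mul _ (by positivity), ← ENNReal.rpow_mul, toReal_ofNat,
        div_mul_cancel₀ _ two_ne_zero]
    · simp [W, hx]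
  have hW : ∀ x, ‖W x‖ₑ ^ R = s.indicator (fun x => ‖g x‖ₑ ^ Q) x := by
    intro x
    by_cases hx : x ∈ s
    · simp only [W, Set.indicator_of_mem hx]
      rw [enorm_ofReal_norm_rpow _ hexp, ← ENNReal.rpow_mul, hexpR]
    · simp [W, hx, ENNReal.zero_rpow_of_pos hR]
  have h := hK W
  rw [eLpNorm_eq_of_enorm_rpow_eq two_ne_zero ofNat_ne_top hWg,
    eLpNorm_eq_of_enorm_rpow_eq hr0 hr hW, lintegral_indicator hs, toReal_ofNat, one_div,
    ← hQR, ← one_div, ← one_div] at h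
  exact ENNReal.rpow_le_of_rpow_add_le_mul_rpow hfin (by positivity) h

theorem eLpNorm_count_le_of_forall_eLpNorm_mul_le [MeasurableSingletonClass α] {q r : ℝ≥0∞}
    [HolderTriple q r 2] {g : α → 𝕜} {K : ℝ≥0∞}
    (hK : ∀ W : α → 𝕜, eLpNorm (W * g) 2 Measure.count ≤ K * eLpNorm W r Measure.count) :
    eLpNorm g q Measure.count ≤ K := by
  rcases eq_or_ne r ∞ with rfl | hr
  · obtain rfl : (2 : ℝ≥0∞) = q := HolderTriple.unique q ∞ 2 q
    simpa only [one_mul] using (hK 1).trans (mul_le_of_le_one_right zero_le eLpNorm_one_top_le)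
  rcases eq_or_ne q ∞ with rfl | hq
  · obtain rfl : (2 : ℝ≥0∞) = r := HolderTriple.unique ∞ r 2 r
    rw [eLpNorm_exponent_top]
    refine eLpNormEssSup_le_of_ae_enorm_bound (ae_of_all _ fun x => ?_)
    have hx : ({x} : Set α).indicator 1 * g = ({x} : Set α).indicator fun _ => g x := by
      ext y
      by_cases hy : y = x <;> simp [hy]
    have h := hK (({x} : Set α).indicator fun _ => 1)
    rwa [← Pi.one_def, hx, eLpNorm_indicator_const (measurableSet_singleton x) two_ne_zero
      ofNat_ne_top, Pi.one_def, eLpNorm_indicator_const (measurableSet_singleton x) two_ne_zero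
      ofNat_ne_top, Measure.count_singleton, one_rpow, mul_one, mul_one, enorm_one, mul_one] at h
  have hq0 : q ≠ 0 := (two_pos.trans_le (HolderTriple.le q r 2)).ne'
  rw [eLpNorm_eq_lintegral_rpow_enorm_toReal hq0 hq, lintegral_count, one_div,
    ENNReal.rpow_inv_le_iff (toReal_pos hq0 hq), ENNReal.tsum_eq_iSup_sum]
  refine iSup_le fun s => ?_
  have hs : ∑ x ∈ s, ‖g x‖ₑ ^ q.toReal = ∫⁻ x in s, ‖g x‖ₑ ^ q.toReal ∂Measure.count := by
    simp [lintegral_finset]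
  rw [hs, ← ENNReal.rpow_inv_le_iff (toReal_pos hq0 hq), ← one_div]
  refine setLIntegral_enorm_rpow_le_of_forall_eLpNorm_mul_le hq hr hK s.measurableSet ?_
  rw [← hs]
  exact ENNReal.sum_ne_top.2 fun x _ => ENNReal.rpow_ne_top_of_nonneg toReal_nonneg enorm_ne_top

end

theorem weighted_l2_to_lp_general (d : ℕ) (p r p' : ℝ≥0∞)
    (hpr : 1 / p = 1 / 2 + 1 / r) (hp' : 1 / p + 1 / p' = 1)
    (C : ℝ≥0∞)
    (A : ((Fin d → ℤ) → ℂ) →ₗ[ℂ] ((Fin d → ℤ) → ℂ))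
    (hA : ∀ (W₁ W₂ u : (Fin d → ℤ) → ℂ),
      eLpNorm (fun x => W₁ x * A (fun y => W₂ y * u y) x) 2
          (Measure.count : Measure (Fin d → ℤ)) ≤
        C * eLpNorm W₁ r (Measure.count : Measure (Fin d → ℤ)) *
          eLpNorm W₂ r (Measure.count : Measure (Fin d → ℤ)) *
          eLpNorm u 2 (Measure.count : Measure (Fin d → ℤ))) :
    ∀ f : (Fin d → ℤ) → ℂ,
      eLpNorm (A f) p' (Measure.count : Measure (Fin d → ℤ)) ≤
        C * eLpNorm f p (Measure.count : Measure (Fin d → ℤ)) := by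
  intro f
  have : HolderTriple r 2 p := ⟨by simpa only [one_div, add_comm] using hpr.symm⟩
  have : HolderConjugate p p' := holderConjugate_iff.2 (by simpa only [one_div] using hp')
  have : HolderTriple p' r 2 := HolderTriple.of_holderConjugate r 2 p p' 2
  obtain ⟨g, h, rfl, hgh⟩ := exists_eq_mul_and_eLpNorm_mul_eLpNorm_le (μ := Measure.count)
    (q := r) (r := 2) (HolderConjugate.ne_zero p p') ofNat_ne_top f
  refine eLpNorm_count_le_of_forall_eLpNorm_mul_le (r := r) fun W => ?_
  calc eLpNorm (W * A (g * h)) 2 Measure.count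
      ≤ C * eLpNorm W r Measure.count * eLpNorm g r Measure.count * eLpNorm h 2 Measure.count :=
        hA W g h
    _ = C * eLpNorm W r Measure.count * (eLpNorm g r Measure.count * eLpNorm h 2 Measure.count) :=
        mul_assoc _ _ _
    _ ≤ C * eLpNorm W r Measure.count * eLpNorm (g * h) p Measure.count := by gcongr
    _ = C * eLpNorm (g * h) p Measure.count * eLpNorm W r Measure.count := mul_right_comm _ _ _

theorem weighted_l2_to_lp (d : ℕ) (p r p' : ℝ≥0∞)
    (hp1 : 1 ≤ p) (hp2 : p ≤ 2) (hr : 2 ≤ r)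
    (hpr : 1 / p = 1 / 2 + 1 / r) (hp' : 1 / p + 1 / p' = 1)
    (C : ℝ≥0∞)
    (A : ((Fin d → ℤ) → ℂ) →ₗ[ℂ] ((Fin d → ℤ) → ℂ))
    (hA : ∀ (W₁ W₂ u : (Fin d → ℤ) → ℂ),
      eLpNorm (fun x => W₁ x * A (fun y => W₂ y * u y) x) 2
          (Measure.count : Measure (Fin d → ℤ)) ≤
        C * eLpNorm W₁ r (Measure.count : Measure (Fin d → ℤ)) *
          eLpNorm W₂ r (Measure.count : Measure (Fin d → ℤ)) *
          eLpNorm u 2 (Measure.count : Measure (Fin d → ℤ))) :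
    ∀ f : (Fin d → ℤ) → ℂ,
      eLpNorm (A f) p' (Measure.count : Measure (Fin d → ℤ)) ≤
        C * eLpNorm f p (Measure.count : Measure (Fin d → ℤ)) :=
  weighted_l2_to_lp_general d p r p' hpr hp' C A hA
end

section
/- Let a₁, a₂, a₃ ∈ ℝ all nonzero, b₁, b₂, b₃ ∈ ℝ with a_j² + b_j² = 1, b₃ ≠ 0, c_j = b_j/a_j, and suppose b₁c₁ + b₂c₂ + b₃c₃ = 0. Let B be the 2×2 symmetric matrix with entries B₁₁ = a₁b₃² + a₃b₁², B₂₂ = a₂b₃² + a₃b₂², B₁₂ = B₂₁ = b₁b₂a₃. Then B · (c₁, c₂)ᵀ = 0. -/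
theorem null_eigenvector (a₁ a₂ a₃ b₁ b₂ b₃ : ℝ)
    (h₁ : a₁ ≠ 0) (h₂ : a₂ ≠ 0) (h₃ : a₃ ≠ 0)
    (hb₃ : b₃ ≠ 0)
    (hs₁ : a₁ ^ 2 + b₁ ^ 2 = 1) (hs₂ : a₂ ^ 2 + b₂ ^ 2 = 1) (hs₃ : a₃ ^ 2 + b₃ ^ 2 = 1)
    (horth : b₁ * (b₁ / a₁) + b₂ * (b₂ / a₂) + b₃ * (b₃ / a₃) = 0) :
    (!![a₁ * b₃ ^ 2 + a₃ * b₁ ^ 2, b₁ * b₂ * a₃;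
        b₁ * b₂ * a₃, a₂ * b₃ ^ 2 + a₃ * b₂ ^ 2]).mulVec ![b₁ / a₁, b₂ / a₂] = 0 := by
  field_simp at horth
  funext i
  fin_cases i <;>
    simp [Matrix.mulVec, dotProduct] <;>
    field_simp <;>
    first
      | linear_combination (-b₁) * horth
      | linear_combination (-b₂) * horth
      | linear_combination b₁ * horth
      | linear_combination b₂ * horth
end

section
/- Let M(ξ) = a₁a₂b₃² + a₁a₃b₂² + a₂a₃b₁² where a_j = cos 2πξ_j, b_j = sin 2πξ_j, and ξ₃ = f(ξ₁,ξ₂) is a smooth function with ∂_{ξ_j}f = -b_j/b₃ (b₃ ≠ 0). Then ∂_{ξ₁}M = 2π b₁(a₁ - a₃)(1 - a₂(a₁+a₂+a₃)) and ∂_{ξ₂}M = 2π b₂(a₂ - a₃)(1 - a₁(a₁+a₂+a₃)). -/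
open Real

theorem curvature_numerator_derivative (V : Set (Fin 2 → ℝ)) (hV : IsOpen V)
    (f : (Fin 2 → ℝ) → ℝ) (ξ' : Fin 2 → ℝ) (hξ : ξ' ∈ V)
    (hf : ContDiffOn ℝ (⊤ : ℕ∞) f V)
    (hb3 : ∀ ζ ∈ V, Real.sin (2 * π * f ζ) ≠ 0)
    (hgrad : ∀ ζ ∈ V, ∀ j : Fin 2,
      fderiv ℝ f ζ (Pi.single j 1) =
        -Real.sin (2 * π * ζ j) / Real.sin (2 * π * f ζ)) :
    (fderiv ℝ (fun ζ : Fin 2 → ℝ =>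
        Real.cos (2 * π * ζ 0) * Real.cos (2 * π * ζ 1) * Real.sin (2 * π * f ζ) ^ 2 +
        Real.cos (2 * π * ζ 0) * Real.cos (2 * π * f ζ) * Real.sin (2 * π * ζ 1) ^ 2 +
        Real.cos (2 * π * ζ 1) * Real.cos (2 * π * f ζ) * Real.sin (2 * π * ζ 0) ^ 2)
        ξ' (Pi.single 0 1) =
      2 * π * Real.sin (2 * π * ξ' 0) *
        (Real.cos (2 * π * ξ' 0) - Real.cos (2 * π * f ξ')) *
        (1 - Real.cos (2 * π * ξ' 1) *
          (Real.cos (2 * π * ξ' 0) + Real.cos (2 * π * ξ' 1) + Real.cos (2 * π * f ξ')))) ∧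
    (fderiv ℝ (fun ζ : Fin 2 → ℝ =>
        Real.cos (2 * π * ζ 0) * Real.cos (2 * π * ζ 1) * Real.sin (2 * π * f ζ) ^ 2 +
        Real.cos (2 * π * ζ 0) * Real.cos (2 * π * f ζ) * Real.sin (2 * π * ζ 1) ^ 2 +
        Real.cos (2 * π * ζ 1) * Real.cos (2 * π * f ζ) * Real.sin (2 * π * ζ 0) ^ 2)
        ξ' (Pi.single 1 1) =
      2 * π * Real.sin (2 * π * ξ' 1) *
        (Real.cos (2 * π * ξ' 1) - Real.cos (2 * π * f ξ')) *
        (1 - Real.cos (2 * π * ξ' 0) *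
          (Real.cos (2 * π * ξ' 0) + Real.cos (2 * π * ξ' 1) + Real.cos (2 * π * f ξ')))) := by

  have hmem : V ∈ nhds ξ' := hV.mem_nhds hξ
  have hfd : DifferentiableAt ℝ f ξ' :=
    ((hf.contDiffAt hmem).differentiableAt (by simp))
  set L := fderiv ℝ f ξ' with hLdef
  have hL : HasFDerivAt f L ξ' := hfd.hasFDerivAt
  have d0 : HasFDerivAt (fun ζ : Fin 2 → ℝ => 2 * π * ζ 0)
      ((2 * π) • (ContinuousLinearMap.proj 0 : (Fin 2 → ℝ) →L[ℝ] ℝ)) ξ' :=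
    (hasFDerivAt_apply (0 : Fin 2) ξ').const_mul (2 * π)
  have d1 : HasFDerivAt (fun ζ : Fin 2 → ℝ => 2 * π * ζ 1)
      ((2 * π) • (ContinuousLinearMap.proj 1 : (Fin 2 → ℝ) →L[ℝ] ℝ)) ξ' :=
    (hasFDerivAt_apply (1 : Fin 2) ξ').const_mul (2 * π)
  have d3 : HasFDerivAt (fun ζ : Fin 2 → ℝ => 2 * π * f ζ) ((2 * π) • L) ξ' :=
    hL.const_mul (2 * π)
  simp only [pow_two]
  have hM := (((d0.cos.mul d1.cos).mul (d3.sin.mul d3.sin)).add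
      ((d0.cos.mul d3.cos).mul (d1.sin.mul d1.sin))).add
      ((d1.cos.mul d3.cos).mul (d0.sin.mul d0.sin))
  have hF := hM.fderiv; simp only [Pi.mul_def, Pi.add_def] at hF
  have hs3 : Real.sin (2 * π * f ξ') ≠ 0 := hb3 ξ' hξ
  have hg0 : L (Pi.single 0 1) =
      -Real.sin (2 * π * ξ' 0) / Real.sin (2 * π * f ξ') := hgrad ξ' hξ 0
  have hg1 : L (Pi.single 1 1) =
      -Real.sin (2 * π * ξ' 1) / Real.sin (2 * π * f ξ') := hgrad ξ' hξ 1
  have hx0 : Real.sin (2 * π * f ξ') * L (Pi.single 0 1) = -Real.sin (2 * π * ξ' 0) := by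
    rw [hg0]; field_simp
  have hx1 : Real.sin (2 * π * f ξ') * L (Pi.single 1 1) = -Real.sin (2 * π * ξ' 1) := by
    rw [hg1]; field_simp
  have p0 := Real.sin_sq_add_cos_sq (2 * π * ξ' 0)
  have p1 := Real.sin_sq_add_cos_sq (2 * π * ξ' 1)
  have p3 := Real.sin_sq_add_cos_sq (2 * π * f ξ')
  constructor
  · rw [hF]
    simp only [ContinuousLinearMap.add_apply, ContinuousLinearMap.smul_apply,
      ContinuousLinearMap.proj_apply, Pi.single_apply, smul_eq_mul,
      if_pos rfl, if_true, reduceIte, if_neg (by decide : (1 : Fin 2) ≠ 0), ContinuousLinearMap.neg_apply,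
      mul_zero, mul_one, zero_mul, add_zero, zero_add, neg_mul, mul_neg, neg_neg]
    linear_combination
      (2 * π * (2 * Real.cos (2 * π * ξ' 0) * Real.cos (2 * π * ξ' 1) * Real.cos (2 * π * f ξ')
        - Real.cos (2 * π * ξ' 0) * Real.sin (2 * π * ξ' 1) ^ 2
        - Real.cos (2 * π * ξ' 1) * Real.sin (2 * π * ξ' 0) ^ 2)) * hx0
      + (2 * π * Real.sin (2 * π * ξ' 0) * Real.cos (2 * π * ξ' 1)) * p0
      + (2 * π * Real.sin (2 * π * ξ' 0) * (Real.cos (2 * π * ξ' 0) - Real.cos (2 * π * f ξ'))) * p1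
      - (2 * π * Real.sin (2 * π * ξ' 0) * Real.cos (2 * π * ξ' 1)) * p3
  · rw [hF]
    simp only [ContinuousLinearMap.add_apply, ContinuousLinearMap.smul_apply,
      ContinuousLinearMap.proj_apply, Pi.single_apply, smul_eq_mul,
      if_pos rfl, if_true, reduceIte, if_neg (by decide : (0 : Fin 2) ≠ 1), ContinuousLinearMap.neg_apply,
      mul_zero, mul_one, zero_mul, add_zero, zero_add, neg_mul, mul_neg, neg_neg]
    linear_combination
      (2 * π * (2 * Real.cos (2 * π * ξ' 0) * Real.cos (2 * π * ξ' 1) * Real.cos (2 * π * f ξ')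
        - Real.cos (2 * π * ξ' 0) * Real.sin (2 * π * ξ' 1) ^ 2
        - Real.cos (2 * π * ξ' 1) * Real.sin (2 * π * ξ' 0) ^ 2)) * hx1
      + (2 * π * Real.sin (2 * π * ξ' 1) * (Real.cos (2 * π * ξ' 1) - Real.cos (2 * π * f ξ'))) * p0
      + (2 * π * Real.sin (2 * π * ξ' 1) * Real.cos (2 * π * ξ' 0)) * p1
      - (2 * π * Real.sin (2 * π * ξ' 1) * Real.cos (2 * π * ξ' 0)) * p3
end
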